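/- Let n ≥ 1 be an integer and K ≥ 1 a real number. There exists a constant C = C(n, K) such that for every R > 0, every measurable f : ℝ^n → [0, ∞), and all α, β ∈ ℝ^n with (f ∗ φ_R)(α) < ∞, one has |(f ∗ φ_R)(α) − (f ∗ φ_R)(α + β)| ≤ C R^{−1} |β| (1 + (|β|/R)^K) (f ∗ φ_R)(α). -/
import Mathlib


open MeasureTheory
open scoped ENNReal RealInnerProductSpace

/-- Comparison: shifting the argument changes the weight by a controlled factor. -/
lemma auxA {E : Type*} [NormedAddCommGroup E] [InnerProductSpace ℝ E]
    {K : ℝ} (hK : 0 ≤ K) (x b : E) {r : ℝ} (hbr : ‖b‖ ≤ r) :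
    (1 + ‖x + b‖ ^ 2) ^ (-(K/2)) ≤ (2*(1+r^2)) ^ (K/2) * (1 + ‖x‖ ^ 2) ^ (-(K/2)) := by
  have hb0 : (0:ℝ) ≤ ‖b‖ := norm_nonneg b
  have hr0 : (0:ℝ) ≤ r := hb0.trans hbr
  have hA : (0:ℝ) < 1 + ‖x + b‖ ^ 2 := by positivity
  have hB : (0:ℝ) < 1 + ‖x‖ ^ 2 := by positivity
  have hc : (0:ℝ) < 2*(1+r^2) := by positivity
  have hxn : ‖x‖ ≤ ‖x + b‖ + ‖b‖ := by
    calc ‖x‖ = ‖(x + b) - b‖ := by rw [add_sub_cancel_right]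
    _ ≤ ‖x + b‖ + ‖b‖ := norm_sub_le _ _
  have hxar : ‖x‖ ≤ ‖x + b‖ + r := by linarith
  have hsq : ‖x‖ ^ 2 ≤ (‖x + b‖ + r) ^ 2 := by nlinarith [norm_nonneg x]
  have key : 1 + ‖x‖ ^ 2 ≤ (2*(1+r^2)) * (1 + ‖x + b‖ ^ 2) := by
    nlinarith [sq_nonneg (‖x+b‖ - r), sq_nonneg (‖x+b‖*r)]
  have h1 : (1 + ‖x + b‖ ^ 2)⁻¹ ≤ (2*(1+r^2)) / (1 + ‖x‖ ^ 2) := by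
    rw [inv_eq_one_div, div_le_div_iff₀ hA hB]
    nlinarith
  have e1 : (1 + ‖x + b‖ ^ 2) ^ (-(K/2)) = ((1 + ‖x + b‖ ^ 2)⁻¹) ^ (K/2) := by
    rw [Real.rpow_neg hA.le, Real.inv_rpow hA.le]
  have e2 : ((2*(1+r^2)) / (1 + ‖x‖ ^ 2)) ^ (K/2)
      = (2*(1+r^2)) ^ (K/2) * (1 + ‖x‖ ^ 2) ^ (-(K/2)) := by
    rw [div_eq_mul_inv, Real.mul_rpow hc.le (by positivity), Real.inv_rpow hB.le,
      ← Real.rpow_neg hB.le]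
  rw [e1, ← e2]
  exact Real.rpow_le_rpow (by positivity) h1 (by positivity)

/-- Lipschitz estimate for the weight, via the mean value inequality. -/
lemma auxB {E : Type*} [NormedAddCommGroup E] [InnerProductSpace ℝ E]
    {K : ℝ} (hK : 1 ≤ K) (x b : E) :
    |(1 + ‖x + b‖ ^ 2) ^ (-(K/2)) - (1 + ‖x‖ ^ 2) ^ (-(K/2))| ≤
      K * (2*(1+‖b‖^2)) ^ (K/2) * ‖b‖ * (1 + ‖x‖ ^ 2) ^ (-(K/2)) := by
  have hK0 : (0:ℝ) ≤ K := by linarith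
  set q : ℝ → ℝ := fun s => ‖x‖^2 + (2*⟪x,b⟫)*s + ‖b‖^2*s^2 with hqdef
  have hq : ∀ t : ℝ, q t = ‖x + t • b‖ ^ 2 := by
    intro t
    rw [norm_add_sq_real, real_inner_smul_right, norm_smul]
    simp only [hqdef, Real.norm_eq_abs, mul_pow, sq_abs]
    ring
  have hqd : ∀ t : ℝ, HasDerivAt q (2*⟪x,b⟫ + ‖b‖^2*(2*t)) t := by
    intro t
    have h1 : HasDerivAt (fun s : ℝ => ‖x‖^2 + (2*⟪x,b⟫)*s + ‖b‖^2*s^2)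
        (0 + (2*⟪x,b⟫) * 1 + ‖b‖^2 * (↑2*t^(2-1))) t :=
      ((hasDerivAt_const t (‖x‖^2)).add ((hasDerivAt_id t).const_mul (2*⟪x,b⟫))).add
        ((hasDerivAt_pow 2 t).const_mul (‖b‖^2))
    have h2 : (0:ℝ) + (2*⟪x,b⟫) * 1 + ‖b‖^2 * (↑2*t^(2-1)) = 2*⟪x,b⟫ + ‖b‖^2*(2*t) := by
      norm_num
    rw [h2] at h1
    exact h1
  set g : ℝ → ℝ := fun t => (1 + q t) ^ (-(K/2)) with hgdef
  have hqpos : ∀ t : ℝ, (0:ℝ) < 1 + q t := by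
    intro t; rw [hq t]; positivity
  have hgd : ∀ t : ℝ, HasDerivAt g
      ((2*⟪x,b⟫ + ‖b‖^2*(2*t)) * (-(K/2)) * (1 + q t) ^ (-(K/2) - 1)) t := by
    intro t
    exact ((hqd t).const_add 1).rpow_const (Or.inl (hqpos t).ne')
  set Cb : ℝ := K * (2*(1+‖b‖^2)) ^ (K/2) * ‖b‖ * (1 + ‖x‖ ^ 2) ^ (-(K/2)) with hCb
  have bound : ∀ t ∈ Set.Icc (0:ℝ) 1,
      ‖(2*⟪x,b⟫ + ‖b‖^2*(2*t)) * (-(K/2)) * (1 + q t) ^ (-(K/2) - 1)‖ ≤ Cb := by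
    intro t ht
    have htb : ‖t • b‖ ≤ ‖b‖ := by
      rw [norm_smul, Real.norm_eq_abs]
      have h3 : |t| ≤ 1 := abs_le.2 ⟨by linarith [ht.1], ht.2⟩
      calc |t| * ‖b‖ ≤ 1 * ‖b‖ := mul_le_mul_of_nonneg_right h3 (norm_nonneg b)
        _ = ‖b‖ := one_mul _
    have hqt : q t = ‖x + t • b‖ ^ 2 := hq t
    have hP : (0:ℝ) < 1 + ‖x + t • b‖^2 := by positivity
    have hinner : 2*⟪x,b⟫ + ‖b‖^2*(2*t) = 2*⟪x + t • b, b⟫ := by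
      rw [inner_add_left, real_inner_smul_left, real_inner_self_eq_norm_sq]
      ring
    have hPn : (0:ℝ) ≤ (1 + ‖x + t • b‖^2) ^ (-(K/2) - 1) := Real.rpow_nonneg hP.le _
    have hstep1 : ‖x + t • b‖ * (1 + ‖x + t • b‖^2) ^ (-(K/2) - 1)
        ≤ (1 + ‖x + t • b‖^2) ^ (-(K/2)) := by
      have hle : ‖x + t • b‖ ≤ 1 + ‖x + t • b‖^2 := by
        nlinarith [sq_nonneg (‖x + t • b‖ - 1), norm_nonneg (x + t • b)]
      calc ‖x + t • b‖ * (1 + ‖x + t • b‖^2) ^ (-(K/2) - 1)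
          ≤ (1 + ‖x + t • b‖^2) * (1 + ‖x + t • b‖^2) ^ (-(K/2) - 1) :=
            mul_le_mul_of_nonneg_right hle hPn
        _ = (1 + ‖x + t • b‖^2) ^ (-(K/2)) := by
            have h5 := Real.rpow_add hP 1 (-(K/2) - 1)
            rw [Real.rpow_one, show (1:ℝ) + (-(K/2) - 1) = -(K/2) by ring] at h5
            rw [h5]
    have hstep2 : (1 + ‖x + t • b‖^2) ^ (-(K/2))
        ≤ (2*(1+‖b‖^2)) ^ (K/2) * (1 + ‖x‖ ^ 2) ^ (-(K/2)) := auxA hK0 x (t • b) htb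
    rw [Real.norm_eq_abs, hinner, hqt, abs_mul, abs_mul, abs_of_nonneg hPn]
    have habs1 : |2*⟪x + t • b, b⟫| ≤ 2 * (‖x + t • b‖ * ‖b‖) := by
      rw [abs_mul, abs_two]
      have := abs_real_inner_le_norm (x + t • b) b
      nlinarith [abs_nonneg (⟪x + t • b, b⟫ : ℝ)]
    have habs2 : |(-(K/2))| = K/2 := by rw [abs_neg, abs_of_nonneg (by linarith)]
    rw [habs2]
    calc |2*⟪x + t • b, b⟫| * (K/2) * (1 + ‖x + t • b‖^2) ^ (-(K/2) - 1)
        ≤ (2 * (‖x + t • b‖ * ‖b‖)) * (K/2) * (1 + ‖x + t • b‖^2) ^ (-(K/2) - 1) := by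
          apply mul_le_mul_of_nonneg_right _ hPn
          exact mul_le_mul_of_nonneg_right habs1 (by linarith)
      _ = (K * ‖b‖) * (‖x + t • b‖ * (1 + ‖x + t • b‖^2) ^ (-(K/2) - 1)) := by ring
      _ ≤ (K * ‖b‖) * ((1 + ‖x + t • b‖^2) ^ (-(K/2))) :=
          mul_le_mul_of_nonneg_left hstep1 (by positivity)
      _ ≤ (K * ‖b‖) * ((2*(1+‖b‖^2)) ^ (K/2) * (1 + ‖x‖ ^ 2) ^ (-(K/2))) :=
          mul_le_mul_of_nonneg_left hstep2 (by positivity)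
      _ = Cb := by rw [hCb]; ring
  have hmvt := Convex.norm_image_sub_le_of_norm_hasDerivWithin_le
    (f := g) (f' := fun t => (2*⟪x,b⟫ + ‖b‖^2*(2*t)) * (-(K/2)) * (1 + q t) ^ (-(K/2) - 1))
    (fun t _ => (hgd t).hasDerivWithinAt) bound (convex_Icc 0 1)
    (Set.left_mem_Icc.2 zero_le_one) (Set.right_mem_Icc.2 zero_le_one)
  have hg1 : g 1 = (1 + ‖x + b‖ ^ 2) ^ (-(K/2)) := by
    simp only [hgdef, hq 1, one_smul]
  have hg0 : g 0 = (1 + ‖x‖ ^ 2) ^ (-(K/2)) := by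
    simp only [hgdef, hq 0, zero_smul, add_zero]
  rw [hg1, hg0] at hmvt
  simpa using hmvt

/-- Bounding the shift factor by `1 + t^K`. -/
lemma auxC {K : ℝ} (hK : 1 ≤ K) {t : ℝ} (ht : 0 ≤ t) :
    (2*(1+t^2)) ^ (K/2) ≤ 2 ^ (K/2) * 2 ^ K * (1 + t ^ K) := by
  have h1 : (2*(1+t^2)) ^ (K/2) = 2 ^ (K/2) * (1+t^2) ^ (K/2) :=
    Real.mul_rpow (by norm_num) (by positivity)
  have h2 : (1+t^2) ^ (K/2) ≤ (1+t) ^ K := by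
    have hle : (1+t^2) ≤ (1+t)^2 := by nlinarith
    calc (1+t^2) ^ (K/2) ≤ ((1+t)^2) ^ (K/2) :=
          Real.rpow_le_rpow (by positivity) hle (by linarith)
      _ = (1+t) ^ K := by
          rw [← Real.rpow_natCast (1+t) 2, ← Real.rpow_mul (by linarith)]
          norm_num
          rw [show (2:ℝ) * (K/2) = K by ring]
  have h2K : (0:ℝ) < 2 ^ K := Real.rpow_pos_of_pos two_pos K
  have htK : (0:ℝ) ≤ t ^ K := Real.rpow_nonneg ht K
  have h3 : (1+t) ^ K ≤ 2 ^ K * (1 + t ^ K) := by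
    rcases le_total t 1 with h | h
    · have hb : (1+t) ^ K ≤ 2 ^ K :=
        Real.rpow_le_rpow (by linarith) (by linarith) (by linarith)
      nlinarith
    · have hb : (1+t) ^ K ≤ (2*t) ^ K :=
        Real.rpow_le_rpow (by linarith) (by linarith) (by linarith)
      rw [Real.mul_rpow (by norm_num) ht] at hb
      nlinarith
  have h4 : (0:ℝ) ≤ 2 ^ (K/2) := Real.rpow_nonneg (by norm_num) _
  calc (2*(1+t^2)) ^ (K/2) = 2 ^ (K/2) * (1+t^2) ^ (K/2) := h1
    _ ≤ 2 ^ (K/2) * (1+t) ^ K := mul_le_mul_of_nonneg_left h2 h4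
    _ ≤ 2 ^ (K/2) * (2 ^ K * (1 + t ^ K)) := mul_le_mul_of_nonneg_left h3 h4
    _ = 2 ^ (K/2) * 2 ^ K * (1 + t ^ K) := by ring

/-- The polynomially decaying kernel `φ_R(x) = R^{-n} (1 + |x/R|²)^{-K/2}`. -/
noncomputable def phiR (n : ℕ) (K R : ℝ) (x : EuclideanSpace ℝ (Fin n)) : ℝ :=
  (R ^ n)⁻¹ * (1 + ‖R⁻¹ • x‖ ^ 2) ^ (-(K / 2))

/-- Pointwise displacement bound for `phiR`. -/
lemma auxD (n : ℕ) {K R : ℝ} (hK : 1 ≤ K) (hR : 0 < R) (y β : EuclideanSpace ℝ (Fin n)) :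
    |phiR n K R (y + β) - phiR n K R y| ≤
      (K * (2 ^ (K/2) * 2 ^ K)) * R⁻¹ * ‖β‖ * (1 + (‖β‖/R) ^ K) * phiR n K R y := by
  have hx : R⁻¹ • (y + β) = R⁻¹ • y + R⁻¹ • β := smul_add _ _ _
  have hnr : ‖R⁻¹ • β‖ = ‖β‖ / R := by
    rw [norm_smul, norm_inv, Real.norm_eq_abs, abs_of_pos hR, div_eq_inv_mul]
  have hB := auxB hK (R⁻¹ • y) (R⁻¹ • β)
  rw [hnr] at hB
  have hRn : (0:ℝ) ≤ (R^n)⁻¹ := by positivity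
  have hC := auxC hK (show (0:ℝ) ≤ ‖β‖/R by positivity)
  have hAx : (0:ℝ) ≤ (1 + ‖R⁻¹ • y‖ ^ 2) ^ (-(K/2)) := Real.rpow_nonneg (by positivity) _
  have htn : (0:ℝ) ≤ ‖β‖/R := by positivity
  have hK0 : (0:ℝ) ≤ K := by linarith
  unfold phiR
  rw [hx, ← mul_sub, abs_mul, abs_of_nonneg hRn]
  calc (R^n)⁻¹ * |(1 + ‖R⁻¹ • y + R⁻¹ • β‖ ^ 2) ^ (-(K/2)) - (1 + ‖R⁻¹ • y‖ ^ 2) ^ (-(K/2))|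
      ≤ (R^n)⁻¹ * (K * (2*(1+(‖β‖/R)^2)) ^ (K/2) * (‖β‖/R) * (1 + ‖R⁻¹ • y‖ ^ 2) ^ (-(K/2))) :=
        mul_le_mul_of_nonneg_left hB hRn
    _ ≤ (R^n)⁻¹ * (K * (2 ^ (K/2) * 2 ^ K * (1 + (‖β‖/R) ^ K)) * (‖β‖/R)
          * (1 + ‖R⁻¹ • y‖ ^ 2) ^ (-(K/2))) := by
        apply mul_le_mul_of_nonneg_left _ hRn
        apply mul_le_mul_of_nonneg_right _ hAx
        apply mul_le_mul_of_nonneg_right _ htn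
        exact mul_le_mul_of_nonneg_left hC hK0
    _ = (K * (2 ^ (K/2) * 2 ^ K)) * R⁻¹ * ‖β‖ * (1 + (‖β‖/R) ^ K)
          * ((R^n)⁻¹ * (1 + ‖R⁻¹ • y‖ ^ 2) ^ (-(K/2))) := by ring

/-- The convolution `(f ∗ φ_R)(α) = ∫ f(ζ) φ_R(α − ζ) dζ`, taken in `[0, ∞]`. -/
noncomputable def convPhi (n : ℕ) (K R : ℝ) (f : EuclideanSpace ℝ (Fin n) → ℝ)
    (α : EuclideanSpace ℝ (Fin n)) : ℝ≥0∞ :=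
  ∫⁻ ζ : EuclideanSpace ℝ (Fin n), ENNReal.ofReal (f ζ * phiR n K R (α - ζ))

/-- there is `C = C(n, K)` such that for every `R > 0`, every measurable
`f : ℝ^n → [0, ∞)` and all `α, β` with `(f ∗ φ_R)(α) < ∞`, the value `(f ∗ φ_R)(α + β)` is
finite and `|(f ∗ φ_R)(α) − (f ∗ φ_R)(α + β)| ≤ C R⁻¹ |β| (1 + (|β|/R)^K) (f ∗ φ_R)(α)`. -/
theorem convPhi_displacement (n : ℕ) (hn : 1 ≤ n) (K : ℝ) (hK : 1 ≤ K) :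
    ∃ C : ℝ, ∀ R : ℝ, 0 < R →
      ∀ f : EuclideanSpace ℝ (Fin n) → ℝ, Measurable f → (∀ ζ, 0 ≤ f ζ) →
      ∀ α β : EuclideanSpace ℝ (Fin n), convPhi n K R f α < ⊤ →
        convPhi n K R f (α + β) < ⊤ ∧
        |(convPhi n K R f α).toReal - (convPhi n K R f (α + β)).toReal| ≤
          C * R⁻¹ * ‖β‖ * (1 + (‖β‖ / R) ^ K) * (convPhi n K R f α).toReal := by
  refine ⟨K * (2 ^ (K/2) * 2 ^ K), ?_⟩
  intro R hR f hf hfpos α β hfin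
  set D : ℝ := K * (2 ^ (K/2) * 2 ^ K) * R⁻¹ * ‖β‖ * (1 + (‖β‖/R) ^ K) with hDdef
  have hD0 : 0 ≤ D := by
    have h2 : (0:ℝ) ≤ 2 ^ (K/2) := Real.rpow_nonneg (by norm_num) _
    have h3 : (0:ℝ) ≤ 2 ^ K := Real.rpow_nonneg (by norm_num) _
    have h4 : (0:ℝ) ≤ (‖β‖/R) ^ K := Real.rpow_nonneg (by positivity) _
    have hK0 : (0:ℝ) ≤ K := by linarith
    exact mul_nonneg (mul_nonneg (mul_nonneg (mul_nonneg hK0 (mul_nonneg h2 h3))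
      (inv_nonneg.2 hR.le)) (norm_nonneg β)) (by linarith)
  have hphi_nonneg : ∀ z : EuclideanSpace ℝ (Fin n), 0 ≤ phiR n K R z := by
    intro z
    unfold phiR
    exact mul_nonneg (inv_nonneg.2 (pow_nonneg hR.le n)) (Real.rpow_nonneg (by positivity) _)
  have hcont : Continuous (phiR n K R) := by
    unfold phiR
    refine continuous_const.mul ?_
    refine Continuous.rpow_const ?_ fun z => Or.inl (by positivity)
    exact continuous_const.add (((continuous_const_smul R⁻¹).norm).pow 2)
  have hm : ∀ γ : EuclideanSpace ℝ (Fin n),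
      Measurable fun ζ => ENNReal.ofReal (f ζ * phiR n K R (γ - ζ)) := by
    intro γ
    exact (hf.mul (hcont.measurable.comp (measurable_id.const_sub γ))).ennreal_ofReal
  have hpt : ∀ ζ : EuclideanSpace ℝ (Fin n),
      f ζ * phiR n K R (α + β - ζ) ≤ f ζ * phiR n K R (α - ζ) + D * (f ζ * phiR n K R (α - ζ)) ∧
      f ζ * phiR n K R (α - ζ) ≤ f ζ * phiR n K R (α + β - ζ) + D * (f ζ * phiR n K R (α - ζ)) := by
    intro ζ
    have he : α + β - ζ = (α - ζ) + β := by abel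
    have hD := auxD n hK hR (α - ζ) β
    rw [← hDdef] at hD
    rw [he]
    have h1 := abs_le.1 hD
    constructor
    · nlinarith [mul_le_mul_of_nonneg_left h1.2 (hfpos ζ)]
    · nlinarith [mul_le_mul_of_nonneg_left h1.1 (hfpos ζ)]
  have hnn : ∀ ζ : EuclideanSpace ℝ (Fin n), 0 ≤ f ζ * phiR n K R (α - ζ) :=
    fun ζ => mul_nonneg (hfpos ζ) (hphi_nonneg _)
  have hDI : (∫⁻ ζ, ENNReal.ofReal (D * (f ζ * phiR n K R (α - ζ))))
      = ENNReal.ofReal D * convPhi n K R f α := by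
    rw [convPhi, ← lintegral_const_mul' (ENNReal.ofReal D) _ ENNReal.ofReal_ne_top]
    congr 1
    funext ζ
    rw [← ENNReal.ofReal_mul hD0]
  have hIJ : convPhi n K R f (α + β) ≤ convPhi n K R f α + ENNReal.ofReal D * convPhi n K R f α := by
    calc convPhi n K R f (α + β)
        ≤ ∫⁻ ζ, (ENNReal.ofReal (f ζ * phiR n K R (α - ζ))
            + ENNReal.ofReal (D * (f ζ * phiR n K R (α - ζ)))) := by
          refine lintegral_mono fun ζ => ?_
          exact (ENNReal.ofReal_le_ofReal (hpt ζ).1).trans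
            (le_of_eq (ENNReal.ofReal_add (hnn ζ) (mul_nonneg hD0 (hnn ζ))))
      _ = convPhi n K R f α + ∫⁻ ζ, ENNReal.ofReal (D * (f ζ * phiR n K R (α - ζ))) :=
          lintegral_add_left (hm α) _
      _ = convPhi n K R f α + ENNReal.ofReal D * convPhi n K R f α := by rw [hDI]
  have hJI : convPhi n K R f α ≤ convPhi n K R f (α + β) + ENNReal.ofReal D * convPhi n K R f α := by
    calc convPhi n K R f α
        ≤ ∫⁻ ζ, (ENNReal.ofReal (f ζ * phiR n K R (α + β - ζ))
            + ENNReal.ofReal (D * (f ζ * phiR n K R (α - ζ)))) := by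
          refine lintegral_mono fun ζ => ?_
          exact (ENNReal.ofReal_le_ofReal (hpt ζ).2).trans
            (le_of_eq (ENNReal.ofReal_add (mul_nonneg (hfpos ζ) (hphi_nonneg _))
              (mul_nonneg hD0 (hnn ζ))))
      _ = convPhi n K R f (α + β) + ∫⁻ ζ, ENNReal.ofReal (D * (f ζ * phiR n K R (α - ζ))) :=
          lintegral_add_left (hm (α + β)) _
      _ = convPhi n K R f (α + β) + ENNReal.ofReal D * convPhi n K R f α := by rw [hDI]
  have hDItop : ENNReal.ofReal D * convPhi n K R f α ≠ ⊤ :=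
    ENNReal.mul_ne_top ENNReal.ofReal_ne_top hfin.ne
  have hfin' : convPhi n K R f (α + β) < ⊤ :=
    lt_of_le_of_lt hIJ (lt_of_le_of_ne le_top (ENNReal.add_ne_top.2 ⟨hfin.ne, hDItop⟩))
  refine ⟨hfin', ?_⟩
  set i := (convPhi n K R f α).toReal
  set j := (convPhi n K R f (α + β)).toReal
  have hj : j ≤ i + D * i := by
    have h := (ENNReal.toReal_le_toReal hfin'.ne (ENNReal.add_ne_top.2 ⟨hfin.ne, hDItop⟩)).2 hIJ
    rwa [ENNReal.toReal_add hfin.ne hDItop, ENNReal.toReal_mul, ENNReal.toReal_ofReal hD0] at h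
  have hi : i ≤ j + D * i := by
    have h := (ENNReal.toReal_le_toReal hfin.ne (ENNReal.add_ne_top.2 ⟨hfin'.ne, hDItop⟩)).2 hJI
    rwa [ENNReal.toReal_add hfin'.ne hDItop, ENNReal.toReal_mul, ENNReal.toReal_ofReal hD0] at h
  have hgoal : |i - j| ≤ D * i := by
    rw [abs_sub_le_iff]
    constructor <;> linarith
  calc |i - j| ≤ D * i := hgoal
    _ = K * (2 ^ (K/2) * 2 ^ K) * R⁻¹ * ‖β‖ * (1 + (‖β‖/R) ^ K) * i := by rw [hDdef]
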